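/- arXiv:2111.14918 — 9 statements merged into one kernel-verified Lean document; each statement's English description precedes it below -/
import Mathlib

section
/- Let X be a real normed space, let D ⊆ X be a dense subset that is star-shaped in the sense that αD ⊆ D for every real α > 0, and let M ⊆ X be a closed affine hyperplane (an affine subspace of codimension one) with 0 ∉ M. Then the closure of M ∩ D equals M. -/
open Pointwise

/-!
A closed hyperplane `M` with `0 ∉ M` is a level set `f = c`, `c ≠ 0`, of a continuous linear
functional `f`. The radial projection `y ↦ (c / f y) • y` is continuous near `M`, fixes `M`,
and maps the points of `D` in the open half-space `0 < f y / c` into `M ∩ D`, because `D` is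
stable under positive dilations. Since `D` is dense in that half-space, the image is dense in `M`.
-/

theorem Submodule.exists_ker_eq_of_finrank_quotient_eq_one {K V : Type*} [Field K]
    [AddCommGroup V] [Module K V] (p : Submodule K V) (hp : Module.finrank K (V ⧸ p) = 1) :
    ∃ g : V →ₗ[K] K, LinearMap.ker g = p := by
  have : Module.Finite K (V ⧸ p) := Module.finite_of_finrank_eq_succ hp
  obtain ⟨e⟩ : Nonempty ((V ⧸ p) ≃ₗ[K] K) :=
    FiniteDimensional.nonempty_linearEquiv_of_finrank_eq (by rw [hp, Module.finrank_self])
  exact ⟨e.toLinearMap ∘ₗ p.mkQ, by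
    rw [LinearMap.ker_comp, LinearEquiv.ker, Submodule.comap_bot, Submodule.ker_mkQ]⟩

theorem AffineSubspace.exists_eq_preimage_singleton_of_finrank_quotient_eq_one
    {𝕜 E : Type*} [NontriviallyNormedField 𝕜] [AddCommGroup E] [Module 𝕜 E]
    [TopologicalSpace E] [IsTopologicalAddGroup E] [ContinuousSMul 𝕜 E] [T1Space E]
    (M : AffineSubspace 𝕜 E) (hne : (M : Set E).Nonempty) (hclosed : IsClosed (M : Set E))
    (hcodim : Module.finrank 𝕜 (E ⧸ M.direction) = 1) :
    ∃ (f : E →L[𝕜] 𝕜) (c : 𝕜), (M : Set E) = f ⁻¹' {c} := by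
  obtain ⟨x₀, hx₀⟩ := hne
  obtain ⟨g, hker⟩ := M.direction.exists_ker_eq_of_finrank_quotient_eq_one hcodim
  have hg : Continuous g := by
    rw [LinearMap.continuous_iff_isClosed_ker, hker]
    exact M.isClosed_direction_iff.mpr hclosed
  refine ⟨⟨g, hg⟩, g x₀, Set.ext fun x => ?_⟩
  rw [SetLike.mem_coe, ← vsub_right_mem_direction_iff_mem hx₀, ← hker]
  simp [sub_eq_zero]

theorem ContinuousLinearMap.closure_preimage_singleton_inter_eq_of_dense
    {X : Type*} [AddCommGroup X] [Module ℝ X] [TopologicalSpace X] [ContinuousSMul ℝ X]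
    (f : X →L[ℝ] ℝ) {c : ℝ} (hc : c ≠ 0) {D : Set X} (hD : Dense D)
    (hstar : ∀ α : ℝ, 0 < α → α • D ⊆ D) :
    closure (f ⁻¹' {c} ∩ D) = f ⁻¹' {c} := by
  refine (closure_minimal Set.inter_subset_left
    (isClosed_singleton.preimage f.continuous)).antisymm fun x hx => ?_
  set U : Set X := {y | 0 < f y / c}
  have hxU : x ∈ U := by simp_all [U]
  have hU : IsOpen U := isOpen_lt continuous_const (by fun_prop)
  have hproj : ContinuousAt (fun y => (c / f y) • y) x := by
    have : f x ≠ 0 := by simp_all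
    fun_prop (disch := assumption)
  have hfix : (c / f x) • x = x := by simp_all
  have hmaps : (fun y => (c / f y) • y) '' (U ∩ D) ⊆ f ⁻¹' {c} ∩ D := by
    rintro _ ⟨y, ⟨hyU, hyD⟩, rfl⟩
    have hy : f y ≠ 0 := fun h => by simp [U, h] at hyU
    refine ⟨by simp [div_mul_cancel₀ c hy], hstar _ ?_ (Set.smul_mem_smul_set hyD)⟩
    simpa only [inv_div] using inv_pos.mpr (show 0 < f y / c from hyU)
  simpa only [hfix] using
    closure_mono hmaps (mem_closure_image hproj (hD.open_subset_closure_inter hU hxU))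

/-- **Lemma 2.1.** Let `X` be a real normed space, `D ⊆ X` a dense subset that is
star-shaped in the sense that `α • D ⊆ D` for every real `α > 0`, and `M` a closed affine
hyperplane (a nonempty closed affine subspace whose direction has codimension one, i.e. the
quotient of `X` by the direction is one-dimensional) with `0 ∉ M`. Then
`cl(M ∩ D) = M`. -/
theorem closure_hyperplane_inter_dense_starShaped
    {X : Type*} [NormedAddCommGroup X] [NormedSpace ℝ X]
    (D : Set X) (hD : Dense D) (hstar : ∀ α : ℝ, 0 < α → α • D ⊆ D)
    (M : AffineSubspace ℝ X) (hMne : (M : Set X).Nonempty)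
    (hMclosed : IsClosed (M : Set X))
    (hcodim : Module.finrank ℝ (X ⧸ M.direction) = 1)
    (h0 : (0 : X) ∉ M) :
    closure ((M : Set X) ∩ D) = (M : Set X) := by
  obtain ⟨f, c, hM⟩ :=
    M.exists_eq_preimage_singleton_of_finrank_quotient_eq_one hMne hMclosed hcodim
  have hc : c ≠ 0 := by
    rintro rfl
    exact h0 (by simp [← SetLike.mem_coe, hM])
  rw [hM]
  exact f.closure_preimage_singleton_inter_eq_of_dense hc hD hstar
end

section
/- Let Z be a two-dimensional real normed space and let {x, y} ⊆ Z be a linearly independent set. Let M = {x + t·y : t ∈ ℝ} and let N_sm(Z) = {z ∈ Z : Z is smooth at z} ∪ {0}, where Z is smooth at z means that there is exactly one continuous linear functional f on Z with ‖f‖ = 1 and f(z) = ‖z‖. Then the closure of M ∩ N_sm(Z) equals M. -/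
/-!
Parametrize the line by `t ↦ x + t • y`. If `f` is a support functional at parameter `s` and `g`
one at parameter `t > s`, then `f y ≤ g y`. In dimension two a functional is determined by its
values at `x + t • y` and `y`, so at a non-smooth point two support functionals differ on `y`:
each non-smooth parameter carries a nonempty open interval of values `f y`, and these intervals
are pairwise disjoint. Hence only countably many parameters are non-smooth, the smooth ones are
dense in `ℝ`, and their image is dense in the line, which is closed.
-/

open Set

theorem LinearMap.ext_of_linearIndependent_pair {K V W : Type*} [Field K] [AddCommGroup V]
    [Module K V] [AddCommGroup W] [Module K W] (hV : Module.finrank K V = 2) {z v : V}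
    (hzv : LinearIndependent K ![z, v]) {f g : V →ₗ[K] W} (hz : f z = g z) (hv : f v = g v) :
    f = g := by
  refine LinearMap.ext_on_range (hzv.span_eq_top_of_card_eq_finrank (by simp [hV])) ?_
  intro i
  fin_cases i
  exacts [hz, hv]

section SupportFunctional

variable {E : Type*} [NormedAddCommGroup E] [NormedSpace ℝ E]

theorem isClosed_range_add_smul (x y : E) : IsClosed (range fun t : ℝ ↦ x + t • y) := by
  have hline : (range fun t : ℝ ↦ x + t • y) = (x + ·) '' (ℝ ∙ y : Set E) := by
    rw [Submodule.span_singleton_eq_range, ← range_comp]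
    rfl
  rw [hline]
  exact (Homeomorph.addLeft x).isClosedMap _ (ℝ ∙ y).closed_of_finiteDimensional

def IsSupportFunctional (f : E →L[ℝ] ℝ) (z : E) : Prop :=
  ‖f‖ = 1 ∧ f z = ‖z‖

def IsSmoothPoint (z : E) : Prop :=
  ∃! f : E →L[ℝ] ℝ, IsSupportFunctional f z

theorem IsSupportFunctional.apply_le {f : E →L[ℝ] ℝ} {z : E} (hf : IsSupportFunctional f z)
    (w : E) : f w ≤ ‖w‖ :=
  calc f w ≤ ‖f w‖ := Real.le_norm_self _
    _ ≤ ‖f‖ * ‖w‖ := f.le_opNorm w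
    _ = ‖w‖ := by rw [hf.1, one_mul]

theorem IsSupportFunctional.apply_le_apply_of_lt {f g : E →L[ℝ] ℝ} {x y : E} {s t : ℝ}
    (hf : IsSupportFunctional f (x + s • y)) (hg : IsSupportFunctional g (x + t • y))
    (hst : s < t) : f y ≤ g y := by
  have hfg : f (x + t • y) ≤ g (x + t • y) := hg.2 ▸ hf.apply_le _
  have hgf : g (x + s • y) ≤ f (x + s • y) := hf.2 ▸ hg.apply_le _
  simp only [map_add, map_smul, smul_eq_mul] at hfg hgf
  nlinarith

theorem exists_supportFunctional_apply_lt_of_not_isSmoothPoint (hE : Module.finrank ℝ E = 2)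
    {z v : E} (hzv : LinearIndependent ℝ ![z, v]) (hz : ¬IsSmoothPoint z) :
    ∃ f g : E →L[ℝ] ℝ, IsSupportFunctional f z ∧ IsSupportFunctional g z ∧ f v < g v := by
  have hz0 : ‖z‖ ≠ 0 := by simpa using hzv.ne_zero 0
  obtain ⟨f, hf⟩ := exists_dual_vector ℝ z hz0
  obtain ⟨g, hg, hgf⟩ : ∃ g, IsSupportFunctional g z ∧ g ≠ f := by
    by_contra! h
    exact hz ⟨f, hf, h⟩
  have hv : g v ≠ f v := fun hv ↦ hgf <| ContinuousLinearMap.coe_injective <|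
    LinearMap.ext_of_linearIndependent_pair hE hzv (hg.2.trans hf.2.symm) hv
  rcases hv.lt_or_gt with hlt | hlt
  exacts [⟨g, f, hg, hf, hlt⟩, ⟨f, g, hf, hg, hlt⟩]

def supportGap (z y : E) : Set ℝ :=
  ⋃ (f : E →L[ℝ] ℝ) (_ : IsSupportFunctional f z) (g : E →L[ℝ] ℝ) (_ : IsSupportFunctional g z),
    Ioo (f y) (g y)

theorem isOpen_supportGap (z y : E) : IsOpen (supportGap z y) :=
  isOpen_iUnion fun _ ↦ isOpen_iUnion fun _ ↦ isOpen_iUnion fun _ ↦ isOpen_iUnion fun _ ↦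
    isOpen_Ioo

theorem supportGap_nonempty_iff {z y : E} : (supportGap z y).Nonempty ↔
    ∃ f g : E →L[ℝ] ℝ, IsSupportFunctional f z ∧ IsSupportFunctional g z ∧ f y < g y := by
  simp only [supportGap, nonempty_iUnion, nonempty_Ioo]
  grind

theorem pairwiseDisjoint_supportGap (x y : E) :
    (univ : Set ℝ).PairwiseDisjoint fun t ↦ supportGap (x + t • y) y := by
  suffices h : ∀ s t : ℝ, s < t → Disjoint (supportGap (x + s • y) y) (supportGap (x + t • y) y) by
    intro s _ t _ hst
    rcases hst.lt_or_gt with hlt | hlt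
    exacts [h s t hlt, (h t s hlt).symm]
  intro s t hst
  refine disjoint_left.2 fun c hc hc' ↦ ?_
  simp only [supportGap, mem_iUnion] at hc hc'
  obtain ⟨-, -, g, hg, -, hcg⟩ := hc
  obtain ⟨f, hf, -, -, hfc, -⟩ := hc'
  exact lt_asymm (hcg.trans_le (hg.apply_le_apply_of_lt hf hst)) hfc

theorem countable_setOf_exists_supportFunctional_apply_lt (x y : E) :
    {t : ℝ | ∃ f g : E →L[ℝ] ℝ, IsSupportFunctional f (x + t • y) ∧
      IsSupportFunctional g (x + t • y) ∧ f y < g y}.Countable :=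
  ((pairwiseDisjoint_supportGap x y).subset (subset_univ _)).countable_of_isOpen
    (fun _ _ ↦ isOpen_supportGap _ _) fun _ ht ↦ supportGap_nonempty_iff.2 ht

end SupportFunctional

/-- **Lemma 2.2.** Let `Z` be a two-dimensional real normed space, `{x, y} ⊆ Z` linearly
independent, `M = {x + t·y : t ∈ ℝ}` and let `N_sm(Z)` be the set of smooth points of `Z`
(points `z` admitting a unique norm-one continuous linear functional `f` with `f z = ‖z‖`)
together with `0`. Then `cl(M ∩ N_sm(Z)) = M`. -/
theorem closure_line_inter_smoothPoints
    {Z : Type*} [NormedAddCommGroup Z] [NormedSpace ℝ Z]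
    (hdim : Module.finrank ℝ Z = 2) (x y : Z)
    (hxy : LinearIndependent ℝ ![x, y]) :
    closure ({z : Z | ∃ t : ℝ, z = x + t • y} ∩
        ({z : Z | ∃! f : Z →L[ℝ] ℝ, ‖f‖ = 1 ∧ f z = ‖z‖} ∪ {0})) =
      {z : Z | ∃ t : ℝ, z = x + t • y} := by
  set L : ℝ → Z := fun t ↦ x + t • y
  have hline : {z : Z | ∃ t : ℝ, z = x + t • y} = range L := by
    ext; simp [L, eq_comm]
  have hsmooth : ({t | IsSmoothPoint (L t)}ᶜ).Countable :=
    (countable_setOf_exists_supportFunctional_apply_lt x y).mono fun t ht ↦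
      exists_supportFunctional_apply_lt_of_not_isSmoothPoint hdim
        ((LinearIndependent.pair_add_smul_left_iff t).2 hxy) ht
  rw [hline]
  refine (closure_minimal inter_subset_left (isClosed_range_add_smul x y)).antisymm ?_
  calc range L = L '' closure {t | IsSmoothPoint (L t)} := by
        rw [← compl_compl {t | IsSmoothPoint (L t)}, (hsmooth.dense_compl ℝ).closure_eq,
          image_univ]
    _ ⊆ closure (L '' {t | IsSmoothPoint (L t)}) :=
        image_closure_subset_closure_image (by fun_prop)
    _ ⊆ closure (range L ∩ ({z | IsSmoothPoint z} ∪ {0})) :=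
        closure_mono <| image_subset_iff.2 fun t ht ↦ ⟨mem_range_self t, Or.inl ht⟩
end

section
/- Let X be a Hilbert A-module over a C*-algebra A and let x ∈ X. Then ρ₊(x, x⟨x, x⟩) = ‖x‖⁴ = ρ₋(x, x⟨x, x⟩); that is, the limit as t → 0 (from either side) of (‖x + t·x⟨x,x⟩‖² − ‖x‖²)/(2t) exists and equals ‖x‖⁴. -/
open scoped ComplexOrder RightActions
open Filter Topology

/-! With `a = ⟪x, x⟫`, the inner square of `x + t·xa` is `a + 2t a² + t² a³ = f_t(a)` for
`f_t(s) = s (1 + t s)²`. For `|t| ‖a‖ ≤ 1/3`, `f_t` is increasing on `[0, ‖a‖] ⊇ σ(a)` and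
`‖a‖ ∈ σ(a)`, so `‖f_t(a)‖ = f_t(‖a‖)`. Hence `‖x + t·xa‖² = ‖x‖² (1 + t‖x‖²)²` for small `t`,
and the difference quotient is exactly `‖x‖⁴ + t‖x‖⁶/2`. -/

/-- The (right) Hilbert C⋆-module class `CStarModule` as it stood in Mathlib of December 2024
(right action of `Aᵐᵒᵖ`, inner product `A`-linear in the second variable on the right). -/
class RightCStarModule (A : outParam Type*) (E : Type*) [NonUnitalSemiring A] [StarRing A]
    [Module ℂ A] [AddCommGroup E] [Module ℂ E] [PartialOrder A] [SMul Aᵐᵒᵖ E] [Norm A] [Norm E]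
    extends Inner A E where
  inner_add_right {x} {y} {z} : inner x (y + z) = inner x y + inner x z
  inner_self_nonneg {x} : 0 ≤ inner x x
  inner_self {x} : inner x x = 0 ↔ x = 0
  inner_op_smul_right {a : A} {x y : E} : inner x (y <• a) = inner x y * a
  inner_smul_right_complex {z : ℂ} {x} {y} : inner x (z • y) = z • inner x y
  star_inner x y : star (inner x y) = inner y x
  norm_eq_sqrt_norm_inner_self x : ‖x‖ = √‖inner x x‖

theorem monotoneOn_mul_one_add_mul_sq {t r : ℝ} (ht : |t| * r ≤ 1 / 3) :
    MonotoneOn (fun s : ℝ => s * (1 + t * s) ^ 2) (Set.Icc 0 r) := by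
  rintro s ⟨hs, -⟩ u ⟨-, hur⟩ hsu
  have htu : |t| * u ≤ 1 / 3 := by nlinarith [abs_nonneg t]
  have hts : |t| * s ≤ 1 / 3 := by nlinarith [abs_nonneg t]
  have hlin : 1 / 3 ≤ 1 + t * (u + s) := by nlinarith [neg_abs_le t]
  have hquad : t ^ 2 * (u * s) ≤ 1 / 9 := by
    rw [← sq_abs]; nlinarith [mul_nonneg (abs_nonneg t) hs]
  -- `u (1 + t u)² - s (1 + t s)² = (u - s) ((1 + t (u + s))² - t² u s)`
  have hfactor : 0 ≤ (1 + t * (u + s)) ^ 2 - t ^ 2 * (u * s) := by nlinarith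
  nlinarith [mul_nonneg (sub_nonneg.2 hsu) hfactor]

theorem cfcₙ_mul_one_add_mul_sq {A : Type*} [NonUnitalCStarAlgebra A] (a : A) (t : ℝ)
    (ha : IsSelfAdjoint a := by cfc_tac) :
    cfcₙ (fun s : ℝ => s * (1 + t * s) ^ 2) a = a + (2 * t) • (a * a) + t ^ 2 • (a * a * a) := by
  have hpoly : (fun s : ℝ => s * (1 + t * s) ^ 2)
      = fun s => s + (2 * t) * (s * s) + t ^ 2 * (s * s * s) := by
    ext s; ring
  rw [hpoly, cfcₙ_add .., cfcₙ_add .., cfcₙ_const_mul .., cfcₙ_const_mul .., cfcₙ_mul ..,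
    cfcₙ_mul .., cfcₙ_mul .., cfcₙ_id' ℝ a]

open NonUnitalIsometricContinuousFunctionalCalculus in
theorem norm_cfcₙ_of_monotoneOn {A : Type*} [NonUnitalCStarAlgebra A] [PartialOrder A]
    [StarOrderedRing A] {a : A} (ha : 0 ≤ a) {f : ℝ → ℝ}
    (hf : MonotoneOn f (Set.Icc 0 ‖a‖)) (hfc : ContinuousOn f (quasispectrum ℝ a))
    (hf0 : f 0 = 0) : ‖cfcₙ f a‖ = f ‖a‖ := by
  have mem_Icc : ∀ s ∈ quasispectrum ℝ a, s ∈ Set.Icc 0 ‖a‖ := fun s hs =>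
    ⟨quasispectrum_nonneg_of_nonneg a ha s hs, (le_abs_self s).trans (norm_quasispectrum_le a hs)⟩
  have hnorm : ‖a‖ ∈ Set.Icc 0 ‖a‖ := ⟨norm_nonneg a, le_rfl⟩
  have hf_nonneg : ∀ s ∈ Set.Icc 0 ‖a‖, 0 ≤ f s := fun s hs =>
    hf0 ▸ hf ⟨le_rfl, norm_nonneg a⟩ hs hs.1
  have norm_mem : ‖a‖ ∈ quasispectrum ℝ a := by
    obtain ⟨s, hs, hs_norm⟩ := (isGreatest_norm_quasispectrum (𝕜 := ℝ) a).1
    convert hs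
    exact hs_norm.symm.trans (Real.norm_of_nonneg (mem_Icc s hs).1)
  refine (IsGreatest.norm_cfcₙ f a hfc hf0).unique ⟨⟨‖a‖, norm_mem, ?_⟩, ?_⟩
  · exact Real.norm_of_nonneg (hf_nonneg _ hnorm)
  · rintro _ ⟨s, hs, rfl⟩
    exact (Real.norm_of_nonneg (hf_nonneg s (mem_Icc s hs))).trans_le
      (hf (mem_Icc s hs) hnorm (mem_Icc s hs).2)

namespace RightCStarModule

variable {A E : Type*} [NonUnitalCStarAlgebra A] [PartialOrder A] [NormedAddCommGroup E]
  [NormedSpace ℂ E] [SMul Aᵐᵒᵖ E] [RightCStarModule A E]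

theorem norm_sq_eq_norm_inner_self (x : E) : ‖x‖ ^ 2 = ‖inner A x x‖ := by
  rw [norm_eq_sqrt_norm_inner_self (A := A) x, Real.sq_sqrt (norm_nonneg _)]

theorem inner_add_left {x y z : E} : inner A (x + y) z = inner A x z + inner A y z := by
  rw [← star_inner z (x + y), inner_add_right, star_add, star_inner, star_inner]

theorem inner_smul_right_real {r : ℝ} {x y : E} : inner A x (r • y) = r • inner A x y := by
  rw [← Complex.coe_smul r y, inner_smul_right_complex, Complex.coe_smul]

theorem inner_smul_left_real {r : ℝ} {x y : E} : inner A (r • x) y = r • inner A x y := by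
  rw [← star_inner y (r • x), inner_smul_right_real, star_smul, star_trivial, star_inner]

theorem inner_op_smul_left {a : A} {x y : E} : inner A (x <• a) y = star a * inner A x y := by
  rw [← star_inner y (x <• a), inner_op_smul_right, star_mul, star_inner]

theorem inner_self_add_smul_op_smul (x : E) (t : ℝ) (a : A) :
    inner A (x + t • (x <• a)) (x + t • (x <• a))
      = inner A x x + t • (inner A x x * a + star a * inner A x x)
        + t ^ 2 • (star a * inner A x x * a) := by
  simp only [inner_add_left, inner_add_right, inner_smul_left_real, inner_smul_right_real,
    inner_op_smul_left, inner_op_smul_right, add_mul, smul_mul_assoc, mul_assoc]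
  module

variable [StarOrderedRing A]

theorem norm_add_smul_op_smul_inner_self_sq (x : E) {t : ℝ} (ht : |t| * ‖x‖ ^ 2 ≤ 1 / 3) :
    ‖x + t • (x <• inner A x x)‖ ^ 2 = ‖x‖ ^ 2 * (1 + t * ‖x‖ ^ 2) ^ 2 := by
  rw [norm_sq_eq_norm_inner_self (A := A) x] at ht ⊢
  rw [norm_sq_eq_norm_inner_self (A := A), inner_self_add_smul_op_smul]
  set a : A := inner A x x
  have ha : 0 ≤ a := inner_self_nonneg
  have hcfc : a + t • (a * a + star a * a) + t ^ 2 • (star a * a * a)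
      = cfcₙ (fun s : ℝ => s * (1 + t * s) ^ 2) a := by
    rw [cfcₙ_mul_one_add_mul_sq a t, (IsSelfAdjoint.of_nonneg ha).star_eq]
    module
  rw [hcfc, norm_cfcₙ_of_monotoneOn ha (monotoneOn_mul_one_add_mul_sq ht) (by fun_prop) (by simp)]

theorem tendsto_norm_add_smul_op_smul_inner_self_sq_sub_div_nhdsNE (x : E) :
    Tendsto (fun t : ℝ => (‖x + t • (x <• inner A x x)‖ ^ 2 - ‖x‖ ^ 2) / (2 * t))
      (𝓝[≠] 0) (𝓝 (‖x‖ ^ 4)) := by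
  have t_small : ∀ᶠ t : ℝ in 𝓝 0, |t| * ‖x‖ ^ 2 ≤ 1 / 3 := by
    have : Tendsto (fun t : ℝ => |t| * ‖x‖ ^ 2) (𝓝 0) (𝓝 0) :=
      (by fun_prop : Continuous fun t : ℝ => |t| * ‖x‖ ^ 2).tendsto' 0 0 (by simp)
    exact this.eventually (eventually_le_nhds (by norm_num))
  have quotient_eq : ∀ᶠ t : ℝ in 𝓝[≠] 0,
      ‖x‖ ^ 4 + t * ‖x‖ ^ 6 / 2 = (‖x + t • (x <• inner A x x)‖ ^ 2 - ‖x‖ ^ 2) / (2 * t) := by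
    filter_upwards [nhdsWithin_le_nhds t_small, self_mem_nhdsWithin] with t ht (ht0 : t ≠ 0)
    rw [norm_add_smul_op_smul_inner_self_sq x ht]
    field_simp
    ring
  refine Tendsto.congr' quotient_eq (tendsto_nhdsWithin_of_tendsto_nhds ?_)
  exact (by fun_prop : Continuous fun t : ℝ => ‖x‖ ^ 4 + t * ‖x‖ ^ 6 / 2).tendsto' 0 _ (by simp)

end RightCStarModule

theorem rhoPlusMinus_inner_self_smul_general
    {A E : Type*} [NonUnitalCStarAlgebra A] [PartialOrder A] [StarOrderedRing A]
    [NormedAddCommGroup E] [NormedSpace ℂ E] [SMul Aᵐᵒᵖ E] [RightCStarModule A E]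
    (x : E) :
    Tendsto (fun t : ℝ => (‖x + t • (x <• (inner A x x : A))‖ ^ 2 - ‖x‖ ^ 2) / (2 * t))
      (𝓝[>] 0) (𝓝 (‖x‖ ^ 4)) ∧
    Tendsto (fun t : ℝ => (‖x + t • (x <• (inner A x x : A))‖ ^ 2 - ‖x‖ ^ 2) / (2 * t))
      (𝓝[<] 0) (𝓝 (‖x‖ ^ 4)) :=
  have h := RightCStarModule.tendsto_norm_add_smul_op_smul_inner_self_sq_sub_div_nhdsNE (A := A) x
  ⟨h.mono_left (nhdsWithin_mono _ fun _ ht => ne_of_gt ht),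
    h.mono_left (nhdsWithin_mono _ fun _ ht => ne_of_lt ht)⟩

/-- **Theorem 2.6.** For an element `x` of a Hilbert C⋆-module `E` over a C⋆-algebra `A`,
`ρ₊(x, x⟪x, x⟫) = ‖x‖⁴ = ρ₋(x, x⟪x, x⟫)`: the limit of `(‖x + t·x⟪x,x⟫‖² - ‖x‖²)/(2t)`
as `t → 0` from either side exists and equals `‖x‖⁴`. -/
theorem rhoPlusMinus_inner_self_smul
    {A E : Type*} [NonUnitalCStarAlgebra A] [PartialOrder A] [StarOrderedRing A]
    [NormedAddCommGroup E] [NormedSpace ℂ E] [SMul Aᵐᵒᵖ E] [RightCStarModule A E]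
    [CompleteSpace E] (x : E) :
    Tendsto (fun t : ℝ => (‖x + t • (x <• (inner A x x : A))‖ ^ 2 - ‖x‖ ^ 2) / (2 * t))
      (𝓝[>] 0) (𝓝 (‖x‖ ^ 4)) ∧
    Tendsto (fun t : ℝ => (‖x + t • (x <• (inner A x x : A))‖ ^ 2 - ‖x‖ ^ 2) / (2 * t))
      (𝓝[<] 0) (𝓝 (‖x‖ ^ 4)) :=
  rhoPlusMinus_inner_self_smul_general x
end

section
/- Let X be a Hilbert A-module over a C*-algebra A, let x ∈ X, and let α, β be real numbers with α > 0 and β > 0. Then ‖α·x + β·x⟨x, x⟩‖ = α‖x‖ + β‖x‖³. -/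
open scoped ComplexOrder RightActions

/-!
Expanding the inner product gives `⟪y, y⟫ = f ⟪x, x⟫` for `y = α • x + β • x ⟪x, x⟫` and
`f t = t (α + β t) ^ 2`, a function monotone on `[0, ∞)`. For a positive element `a` the top
of its quasispectrum is `‖a‖`, so `‖f a‖ = f ‖a‖`; with `‖⟪x, x⟫‖ = ‖x‖ ^ 2` this reads
`‖y‖ ^ 2 = (α ‖x‖ + β ‖x‖ ^ 3) ^ 2`.
-/

/-- The Mathlib (December 2024) definition of `CStarModule`: right `A`-action via `Aᵐᵒᵖ`,
inner product `A`-linear on the right in the second variable. -/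
class OldCStarModule (A E : Type*) [NonUnitalSemiring A] [StarRing A]
    [Module ℂ A] [AddCommGroup E] [Module ℂ E] [PartialOrder A] [SMul Aᵐᵒᵖ E] [Norm A] [Norm E]
    extends Inner A E where
  inner_add_right {x} {y} {z} : inner x (y + z) = inner x y + inner x z
  inner_self_nonneg {x} : 0 ≤ inner x x
  inner_self {x} : inner x x = 0 ↔ x = 0
  inner_op_smul_right {a : A} {x y : E} : inner x (y <• a) = inner x y * a
  inner_smul_right_complex {z : ℂ} {x} {y} : inner x (z • y) = z • inner x y
  star_inner x y : star (inner x y) = inner y x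
  norm_eq_sqrt_norm_inner_self x : ‖x‖ = √‖inner x x‖

section CFC

variable {A : Type*} [NonUnitalCStarAlgebra A]

lemma cfcₙ_mul_add_mul_sq (a : A) (α β : ℝ) (ha : IsSelfAdjoint a := by cfc_tac) :
    cfcₙ (fun t : ℝ => t * (α + β * t) ^ 2) a
      = α ^ 2 • a + (2 * α * β) • (a * a) + β ^ 2 • (a * a * a) := by
  have hsq : cfcₙ (fun t : ℝ => t * t) a = a * a := by
    rw [cfcₙ_mul _ _ a, cfcₙ_id' ℝ a]
  have hcube : cfcₙ (fun t : ℝ => t * t * t) a = a * a * a := by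
    rw [cfcₙ_mul _ _ a, hsq, cfcₙ_id' ℝ a]
  have hpoly : (fun t : ℝ => t * (α + β * t) ^ 2)
      = fun t => α ^ 2 • t + (2 * α * β) • (t * t) + β ^ 2 • (t * t * t) := by
    ext t; simp only [smul_eq_mul]; ring
  rw [hpoly, cfcₙ_add _ _ a, cfcₙ_add _ _ a, cfcₙ_smul _ _ a, cfcₙ_smul _ _ a,
    cfcₙ_smul _ _ a, hsq, hcube, cfcₙ_id' ℝ a]

variable [PartialOrder A] [StarOrderedRing A]

lemma norm_mem_quasispectrum_of_nonneg {a : A} (ha : 0 ≤ a) : ‖a‖ ∈ quasispectrum ℝ a := by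
  obtain ⟨t, ht, ht_norm : ‖t‖ = ‖a‖⟩ :=
    (NonUnitalIsometricContinuousFunctionalCalculus.isGreatest_norm_quasispectrum (𝕜 := ℝ) a).1
  rwa [← ht_norm, Real.norm_of_nonneg (quasispectrum_nonneg_of_nonneg a ha t ht)]

lemma norm_cfcₙ_of_nonneg_of_monotoneOn {a : A} (ha : 0 ≤ a) (f : ℝ → ℝ)
    (hf : MonotoneOn f (Set.Ici 0)) (hf_cont : ContinuousOn f (quasispectrum ℝ a) := by
      cfc_cont_tac) (hf₀ : f 0 = 0 := by cfc_zero_tac) :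
    ‖cfcₙ f a‖ = f ‖a‖ := by
  have hf_nonneg : ∀ t : ℝ, 0 ≤ t → 0 ≤ f t := fun t ht =>
    hf₀ ▸ hf Set.self_mem_Ici ht ht
  refine le_antisymm (norm_cfcₙ_le fun t ht => ?_) ?_
  · have ht₀ : 0 ≤ t := quasispectrum_nonneg_of_nonneg a ha t ht
    have ht_le : t ≤ ‖a‖ := by
      simpa [abs_of_nonneg ht₀] using
        NonUnitalIsometricContinuousFunctionalCalculus.norm_quasispectrum_le a ht
    rw [Real.norm_of_nonneg (hf_nonneg t ht₀)]
    exact hf ht₀ (norm_nonneg a) ht_le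
  · exact (le_abs_self _).trans (norm_apply_le_norm_cfcₙ f a (norm_mem_quasispectrum_of_nonneg ha))

end CFC

namespace OldCStarModule

variable {A E : Type*} [NonUnitalCStarAlgebra A] [PartialOrder A] [NormedAddCommGroup E]
  [NormedSpace ℂ E] [SMul Aᵐᵒᵖ E] [OldCStarModule A E]

lemma inner_add_left {x y z : E} : inner A (x + y) z = inner A x z + inner A y z := by
  rw [← star_inner (A := A) z (x + y), inner_add_right, star_add, star_inner, star_inner]

lemma inner_smul_right_real {r : ℝ} {x y : E} : inner A x (r • y) = r • inner A x y := by
  rw [← Complex.coe_smul, inner_smul_right_complex, Complex.coe_smul]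

lemma inner_smul_left_real {r : ℝ} {x y : E} : inner A (r • x) y = r • inner A x y := by
  rw [← star_inner (A := A) y (r • x), inner_smul_right_real, ← Complex.coe_smul, star_smul,
    Complex.star_def, Complex.conj_ofReal, Complex.coe_smul, star_inner]

lemma inner_op_smul_left {a : A} {x y : E} : inner A (x <• a) y = star a * inner A x y := by
  rw [← star_inner (A := A) y (x <• a), inner_op_smul_right, star_mul, star_inner]

lemma norm_sq_eq_norm_inner_self (x : E) : ‖x‖ ^ 2 = ‖inner A x x‖ := by
  rw [norm_eq_sqrt_norm_inner_self (A := A) x, Real.sq_sqrt (norm_nonneg _)]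

lemma inner_self_smul_add_smul_op_smul_inner_self (x : E) (α β : ℝ) :
    let y := α • x + β • (x <• inner A x x)
    inner A y y = cfcₙ (fun t : ℝ => t * (α + β * t) ^ 2) (inner A x x) := by
  have hsa : IsSelfAdjoint (inner A x x) := star_inner x x
  rw [cfcₙ_mul_add_mul_sq (inner A x x) α β]
  simp only [inner_add_left, inner_add_right, inner_smul_left_real, inner_smul_right_real,
    inner_op_smul_left, inner_op_smul_right, hsa.star_eq, smul_mul_assoc, add_mul, mul_assoc]
  module

end OldCStarModule

theorem norm_smul_add_smul_inner_self_general
    {A E : Type*} [NonUnitalCStarAlgebra A] [PartialOrder A] [StarOrderedRing A]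
    [NormedAddCommGroup E] [NormedSpace ℂ E] [SMul Aᵐᵒᵖ E] [OldCStarModule A E]
    (x : E) (α β : ℝ) (hα : 0 < α) (hβ : 0 < β) :
    ‖α • x + β • (x <• (inner A x x : A))‖ = α * ‖x‖ + β * ‖x‖ ^ 3 := by
  have hmono : MonotoneOn (fun t : ℝ => t * (α + β * t) ^ 2) (Set.Ici 0) := by
    intro s hs t _ hst
    have hs : 0 ≤ s := hs
    dsimp only
    gcongr
  rw [OldCStarModule.norm_eq_sqrt_norm_inner_self (A := A),
    OldCStarModule.inner_self_smul_add_smul_op_smul_inner_self,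
    norm_cfcₙ_of_nonneg_of_monotoneOn OldCStarModule.inner_self_nonneg _ hmono,
    ← OldCStarModule.norm_sq_eq_norm_inner_self,
    show ‖x‖ ^ 2 * (α + β * ‖x‖ ^ 2) ^ 2 = (α * ‖x‖ + β * ‖x‖ ^ 3) ^ 2 by ring]
  exact Real.sqrt_sq (by positivity)

/-- **Theorem 2.7 (generalized Daugavet equation in Hilbert C⋆-modules).**
For an element `x` of a Hilbert C⋆-module `E` over a C⋆-algebra `A` and positive reals
`α, β`, one has `‖α·x + β·x⟪x, x⟫‖ = α‖x‖ + β‖x‖³`. -/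
theorem norm_smul_add_smul_inner_self
    {A E : Type*} [NonUnitalCStarAlgebra A] [PartialOrder A] [StarOrderedRing A]
    [NormedAddCommGroup E] [NormedSpace ℂ E] [SMul Aᵐᵒᵖ E] [OldCStarModule A E]
    [CompleteSpace E] (x : E) (α β : ℝ) (hα : 0 < α) (hβ : 0 < β) :
    ‖α • x + β • (x <• (inner A x x : A))‖ = α * ‖x‖ + β * ‖x‖ ^ 3 :=
  norm_smul_add_smul_inner_self_general x α β hα hβ
end

section
/- Let X be a Hilbert A-module over a C*-algebra A and let x ∈ X. Then x is norm-parallel to x⟨x, x⟩, i.e. there exists a complex number ξ with |ξ| = 1 such that ‖x + ξ·x⟨x, x⟩‖ = ‖x‖ + ‖x⟨x, x⟩‖. -/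
/-!
With `a = ⟪x, x⟫ ≥ 0` one computes `⟪x + x a, x + x a⟫ = a + 2a² + a³` and `⟪x a, x a⟫ = a³`.
For positive `a` and `f` increasing on `[0, ∞)` with `f 0 = 0`, the continuous functional
calculus gives `‖f(a)‖ = f ‖a‖`, so with `t = ‖x‖` we get `‖x a‖ = t³` and
`‖x + x a‖ = t (1 + t²) = ‖x‖ + ‖x a‖`; hence `ξ = 1` works.
-/

open scoped ComplexOrder RightActions

/-- The Mathlib class `CStarModule` as it stood in December 2024 (right `A`-action via `Aᵐᵒᵖ`);
Mathlib's current `CStarModule` uses a left action instead. -/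
class CStarModuleRight (A E : Type*) [NonUnitalSemiring A] [StarRing A]
    [Module ℂ A] [AddCommGroup E] [Module ℂ E] [PartialOrder A] [SMul Aᵐᵒᵖ E] [Norm A] [Norm E]
    extends Inner A E where
  inner_add_right {x} {y} {z} : inner x (y + z) = inner x y + inner x z
  inner_self_nonneg {x} : 0 ≤ inner x x
  inner_self {x} : inner x x = 0 ↔ x = 0
  inner_op_smul_right {a : A} {x y : E} : inner x (y <• a) = inner x y * a
  inner_smul_right_complex {z : ℂ} {x} {y} : inner x (z • y) = z • inner x y
  star_inner x y : star (inner x y) = inner y x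
  norm_eq_sqrt_norm_inner_self x : ‖x‖ = √‖inner x x‖

open Set

section CStarAlgebra

variable {A : Type*} [NonUnitalCStarAlgebra A] [PartialOrder A] [StarOrderedRing A]

lemma norm_cfcₙ_of_nonneg_of_monotoneOn_s9 {f : ℝ → ℝ} {a : A} (ha : 0 ≤ a) (hf : Continuous f)
    (hf₀ : f 0 = 0) (hmono : MonotoneOn f (Ici 0)) : ‖cfcₙ f a‖ = f ‖a‖ := by
  have hspec_nonneg : ∀ y ∈ quasispectrum ℝ a, 0 ≤ y := quasispectrum_nonneg_of_nonneg a ha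
  have hnorm_f : ∀ y ∈ quasispectrum ℝ a, ‖f y‖ = f y := fun y hy ↦
    Real.norm_of_nonneg (hf₀ ▸ hmono self_mem_Ici (hspec_nonneg y hy) (hspec_nonneg y hy))
  obtain ⟨r, hr, hr_norm : ‖r‖ = ‖a‖⟩ :=
    (NonUnitalIsometricContinuousFunctionalCalculus.isGreatest_norm_quasispectrum (𝕜 := ℝ) a).1
  have hr_eq : r = ‖a‖ := by
    rwa [Real.norm_of_nonneg (hspec_nonneg r hr)] at hr_norm
  refine (IsGreatest.norm_cfcₙ f a).unique ⟨⟨r, hr, hr_eq ▸ hnorm_f r hr⟩, ?_⟩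
  rintro - ⟨y, hy, rfl⟩
  change ‖f y‖ ≤ f ‖a‖
  rw [hnorm_f y hy]
  refine hmono (hspec_nonneg y hy) (norm_nonneg a) ?_
  simpa [Real.norm_of_nonneg (hspec_nonneg y hy)] using
    NonUnitalIsometricContinuousFunctionalCalculus.norm_quasispectrum_le a hy

lemma norm_mul_self_mul_self_of_nonneg {a : A} (ha : 0 ≤ a) : ‖a * a * a‖ = ‖a‖ ^ 3 := by
  have hcube : cfcₙ (fun t : ℝ ↦ t * t * t) a = a * a * a := by
    rw [cfcₙ_mul (fun t : ℝ ↦ t * t) (fun t : ℝ ↦ t) a, cfcₙ_mul (fun t : ℝ ↦ t) (fun t : ℝ ↦ t) a,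
      cfcₙ_id' ℝ a]
  rw [← hcube, norm_cfcₙ_of_nonneg_of_monotoneOn_s9 ha (by fun_prop) (by simp)]
  · ring
  · intro s (hs : 0 ≤ s) t (ht : 0 ≤ t) hst
    dsimp only
    gcongr

lemma norm_add_mul_self_add_mul_self_add_cube_of_nonneg {a : A} (ha : 0 ≤ a) :
    ‖a + a * a + a * a + a * a * a‖ = ‖a‖ * (1 + ‖a‖) ^ 2 := by
  have hpoly :
      cfcₙ (fun t : ℝ ↦ t + t * t + t * t + t * t * t) a = a + a * a + a * a + a * a * a := by
    rw [cfcₙ_add (fun t : ℝ ↦ t + t * t + t * t) (fun t : ℝ ↦ t * t * t) a,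
      cfcₙ_add (fun t : ℝ ↦ t + t * t) (fun t : ℝ ↦ t * t) a,
      cfcₙ_add (fun t : ℝ ↦ t) (fun t : ℝ ↦ t * t) a,
      cfcₙ_mul (fun t : ℝ ↦ t * t) (fun t : ℝ ↦ t) a, cfcₙ_mul (fun t : ℝ ↦ t) (fun t : ℝ ↦ t) a,
      cfcₙ_id' ℝ a]
  rw [← hpoly, norm_cfcₙ_of_nonneg_of_monotoneOn_s9 ha (by fun_prop) (by simp)]
  · ring
  · intro s (hs : 0 ≤ s) t (ht : 0 ≤ t) hst
    dsimp only
    gcongr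

end CStarAlgebra

namespace CStarModuleRight

variable {A E : Type*} [NonUnitalCStarAlgebra A] [PartialOrder A]
  [NormedAddCommGroup E] [NormedSpace ℂ E] [SMul Aᵐᵒᵖ E] [CStarModuleRight A E]

lemma inner_add_left (x y z : E) : inner A (x + y) z = inner A x z + inner A y z := by
  rw [← star_inner z, inner_add_right, star_add, star_inner, star_inner]

lemma inner_op_smul_left (a : A) (x y : E) : inner A (x <• a) y = star a * inner A x y := by
  rw [← star_inner y, inner_op_smul_right, star_mul, star_inner]

lemma norm_eq_of_norm_inner_self_eq_sq {x : E} {r : ℝ} (hr : 0 ≤ r)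
    (h : ‖inner A x x‖ = r ^ 2) : ‖x‖ = r := by
  rw [norm_eq_sqrt_norm_inner_self (A := A), h, Real.sqrt_sq hr]

lemma norm_sq_eq_norm_inner_self (x : E) : ‖x‖ ^ 2 = ‖inner A x x‖ := by
  rw [norm_eq_sqrt_norm_inner_self (A := A), Real.sq_sqrt (norm_nonneg _)]

lemma norm_op_smul_inner_self [StarOrderedRing A] (x : E) : ‖x <• inner A x x‖ = ‖x‖ ^ 3 := by
  refine norm_eq_of_norm_inner_self_eq_sq (A := A) (by positivity) ?_
  rw [inner_op_smul_left, inner_op_smul_right, star_inner, ← mul_assoc,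
    norm_mul_self_mul_self_of_nonneg inner_self_nonneg, ← norm_sq_eq_norm_inner_self]
  ring

lemma norm_add_op_smul_inner_self [StarOrderedRing A] (x : E) :
    ‖x + x <• inner A x x‖ = ‖x‖ * (1 + ‖x‖ ^ 2) := by
  set a : A := inner A x x with ha
  have hinner : inner A (x + x <• a) (x + x <• a) = a + a * a + a * a + a * a * a := by
    have hstar : star a = a := star_inner x x
    simp only [inner_add_left, inner_add_right, inner_op_smul_left, inner_op_smul_right, hstar,
      ← ha]
    noncomm_ring
  refine norm_eq_of_norm_inner_self_eq_sq (A := A) (by positivity) ?_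
  rw [hinner, norm_add_mul_self_add_mul_self_add_cube_of_nonneg inner_self_nonneg, ha,
    ← norm_sq_eq_norm_inner_self]
  ring

end CStarModuleRight

theorem norm_parallel_inner_self_smul_general
    {A E : Type*} [NonUnitalCStarAlgebra A] [PartialOrder A] [StarOrderedRing A]
    [NormedAddCommGroup E] [NormedSpace ℂ E] [SMul Aᵐᵒᵖ E] [CStarModuleRight A E]
    (x : E) :
    ∃ ξ : ℂ, ‖ξ‖ = 1 ∧
      ‖x + ξ • (x <• (inner A x x : A))‖ = ‖x‖ + ‖x <• (inner A x x : A)‖ := by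
  refine ⟨1, norm_one, ?_⟩
  rw [one_smul, CStarModuleRight.norm_add_op_smul_inner_self,
    CStarModuleRight.norm_op_smul_inner_self]
  ring

/-- For an element `x` of a Hilbert C⋆-module `E` over a C⋆-algebra `A`, the element `x` is
norm-parallel to `x⟪x, x⟫`: there is a complex number `ξ` of modulus one with
`‖x + ξ·x⟪x, x⟫‖ = ‖x‖ + ‖x⟪x, x⟫‖`. -/
theorem norm_parallel_inner_self_smul
    {A E : Type*} [NonUnitalCStarAlgebra A] [PartialOrder A] [StarOrderedRing A]
    [NormedAddCommGroup E] [NormedSpace ℂ E] [SMul Aᵐᵒᵖ E] [CStarModuleRight A E]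
    [CompleteSpace E] (x : E) :
    ∃ ξ : ℂ, ‖ξ‖ = 1 ∧
      ‖x + ξ • (x <• (inner A x x : A))‖ = ‖x‖ + ‖x <• (inner A x x : A)‖ :=
  norm_parallel_inner_self_smul_general x
end

section
/- Let H be a complex Hilbert space and let T be a bounded linear operator on H. Then ‖T + T T* T‖ = ‖T‖ + ‖T‖³. -/
/-!
The triangle inequality gives `‖T + T T⋆ T‖ ≤ ‖T‖ + ‖T‖³`. Conversely, with `S = T + T T⋆ T`,
`Re ⟪S x, T x⟫ = ‖T x‖² + ‖T⋆ T x‖²` and `‖T x‖² = Re ⟪T⋆ T x, x⟫ ≤ ‖T⋆ T x‖` on the unit ball,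
so `‖T x‖² + ‖T x‖⁴ ≤ ‖S‖ ‖T x‖`, i.e. `‖T x‖ + ‖T x‖³ ≤ ‖S‖`. Taking the supremum over the unit
ball, through the increasing continuous map `r ↦ r + r³`, gives `‖T‖ + ‖T‖³ ≤ ‖S‖`.
-/

open RCLike
open scoped InnerProductSpace

namespace ContinuousLinearMap

theorem map_norm_le_of_forall_norm_lt_one {𝕜 E F : Type*} [DenselyNormedField 𝕜]
    [NormedAddCommGroup E] [NormedSpace 𝕜 E] [SeminormedAddCommGroup F] [NormedSpace 𝕜 F]
    (f : E →L[𝕜] F) {g : ℝ → ℝ} (hg_mono : Monotone g) (hg_cont : Continuous g) {c : ℝ}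
    (h : ∀ x, ‖x‖ < 1 → g ‖f x‖ ≤ c) : g ‖f‖ ≤ c := by
  have hbdd : BddAbove ((fun x => ‖f x‖) '' Metric.ball 0 1) := by
    refine ⟨‖f‖, ?_⟩
    rintro - ⟨x, hx, rfl⟩
    exact f.unit_le_opNorm x (mem_ball_zero_iff.1 hx).le
  rw [← f.sSup_unit_ball_eq_norm, hg_mono.map_csSup_of_continuousAt hg_cont.continuousAt
    ((Metric.nonempty_ball.2 one_pos).image _) hbdd, Set.image_image]
  refine csSup_le ((Metric.nonempty_ball.2 one_pos).image _) ?_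
  rintro - ⟨x, hx, rfl⟩
  exact h x (mem_ball_zero_iff.1 hx)

variable {𝕜 E : Type*} [RCLike 𝕜] [NormedAddCommGroup E] [InnerProductSpace 𝕜 E] [CompleteSpace E]

theorem norm_add_mul_adjoint_mul_self_le (T : E →L[𝕜] E) :
    ‖T + T * adjoint T * T‖ ≤ ‖T‖ + ‖T‖ ^ 3 :=
  calc ‖T + T * adjoint T * T‖ ≤ ‖T‖ + ‖T * adjoint T‖ * ‖T‖ :=
        (norm_add_le _ _).trans <| add_le_add_right (norm_mul_le _ _) _
    _ ≤ ‖T‖ + ‖T‖ * ‖adjoint T‖ * ‖T‖ := by gcongr; exact norm_mul_le _ _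
    _ = ‖T‖ + ‖T‖ ^ 3 := by rw [adjoint.norm_map]; ring

theorem sq_norm_apply_le_norm_adjoint_apply_mul_norm {F : Type*} [NormedAddCommGroup F]
    [InnerProductSpace 𝕜 F] [CompleteSpace F] (T : E →L[𝕜] F) (x : E) :
    ‖T x‖ ^ 2 ≤ ‖adjoint T (T x)‖ * ‖x‖ :=
  (T.apply_norm_sq_eq_inner_adjoint_left x).trans_le (re_inner_le_norm _ _)

theorem re_inner_add_mul_adjoint_mul_self_apply (T : E →L[𝕜] E) (x : E) :
    re ⟪(T + T * adjoint T * T) x, T x⟫_𝕜 = ‖T x‖ ^ 2 + ‖adjoint T (T x)‖ ^ 2 := by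
  rw [add_apply, mul_apply_eq_comp, mul_apply_eq_comp, inner_add_left, map_add,
    inner_self_eq_norm_sq, ← adjoint_inner_right, inner_self_eq_norm_sq]

theorem norm_apply_add_pow_three_le (T : E →L[𝕜] E) {x : E} (hx : ‖x‖ ≤ 1) :
    ‖T x‖ + ‖T x‖ ^ 3 ≤ ‖T + T * adjoint T * T‖ := by
  set S := T + T * adjoint T * T
  obtain hTx | hTx := (norm_nonneg (T x)).eq_or_lt
  · rw [← hTx]; simp
  have h_sq : ‖T x‖ ^ 2 ≤ ‖adjoint T (T x)‖ :=
    (sq_norm_apply_le_norm_adjoint_apply_mul_norm T x).trans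
      (mul_le_of_le_one_right (norm_nonneg _) hx)
  have h_re : re ⟪S x, T x⟫_𝕜 ≤ ‖S‖ * ‖T x‖ :=
    (re_inner_le_norm _ _).trans <| mul_le_mul_of_nonneg_right
      (S.le_opNorm_of_le hx |>.trans_eq (mul_one _)) (norm_nonneg _)
  rw [re_inner_add_mul_adjoint_mul_self_apply] at h_re
  refine le_of_mul_le_mul_right ?_ hTx
  nlinarith [pow_le_pow_left₀ (by positivity) h_sq 2]

end ContinuousLinearMap

/-- **Corollary 2.8 (first part).** For a bounded linear operator `T` on a complex Hilbert
space `H`, `‖T + T T⋆ T‖ = ‖T‖ + ‖T‖³`. -/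
theorem norm_add_mul_adjoint_mul_self
    {H : Type*} [NormedAddCommGroup H] [InnerProductSpace ℂ H] [CompleteSpace H]
    (T : H →L[ℂ] H) :
    ‖T + T * ContinuousLinearMap.adjoint T * T‖ = ‖T‖ + ‖T‖ ^ 3 := by
  refine (ContinuousLinearMap.norm_add_mul_adjoint_mul_self_le T).antisymm ?_
  have h_mono : Monotone fun r : ℝ => r + r ^ 3 :=
    monotone_id.add (Odd.strictMono_pow (by decide)).monotone
  exact T.map_norm_le_of_forall_norm_lt_one h_mono (by fun_prop)
    fun x hx => ContinuousLinearMap.norm_apply_add_pow_three_le T hx.le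
end

section
/- Let H be a complex Hilbert space and let T be a bounded linear operator on H such that dist(T, K(H)) < ‖T‖, where K(H) is the set of compact operators on H and dist is the operator-norm distance. Then there exists a unit vector x₀ ∈ H such that (1/‖T‖)·T x₀ = (1/‖T T* T‖)·T T* T x₀, ‖T x₀‖ = ‖T‖, and ‖T T* T x₀‖ = ‖T T* T‖. -/
/-!
Take `uₙ` in the unit ball with `‖T uₙ‖ → ‖T‖`; expanding the square gives
`‖T†T uₙ - ‖T‖² uₙ‖² ≤ 2‖T‖²(‖T‖² - ‖T uₙ‖²) → 0`. If `K` is compact with `‖T - K‖ < ‖T‖`,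
then `T†T = T†K + R` with `‖R‖ < ‖T‖²`, so `‖T‖² - R` is invertible and
`(‖T‖² - R) uₙ = T†K uₙ - (T†T uₙ - ‖T‖² uₙ)` has a convergent subsequence; hence so does `uₙ`.
Its limit `x₀` is a unit vector with `‖T x₀‖ = ‖T‖` and `T†T x₀ = ‖T‖² x₀`, so
`T T† T x₀ = ‖T‖² T x₀`, and this also forces `‖T T† T‖ = ‖T‖³`.
-/

open Filter Topology ContinuousLinearMap
open scoped InnerProduct

theorem ContinuousLinearMap.exists_seq_norm_le_one_tendsto_norm_apply
    {𝕜 E F : Type*} [DenselyNormedField 𝕜] [NormedAddCommGroup E]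
    [SeminormedAddCommGroup F] [NormedSpace 𝕜 E] [NormedSpace 𝕜 F] (f : E →L[𝕜] F) :
    ∃ u : ℕ → E, (∀ n, ‖u n‖ ≤ 1) ∧ Tendsto (fun n ↦ ‖f (u n)‖) atTop (𝓝 ‖f‖) := by
  have hbdd : BddAbove ((fun x ↦ ‖f x‖) '' Metric.closedBall 0 1) := by
    refine ⟨‖f‖, ?_⟩
    rintro - ⟨x, hx, rfl⟩
    exact f.unit_le_opNorm x (mem_closedBall_zero_iff.1 hx)
  obtain ⟨r, -, hr, hrS⟩ := exists_seq_tendsto_sSup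
    ((Metric.nonempty_closedBall.2 zero_le_one).image _) hbdd
  choose u hu hfu using hrS
  refine ⟨u, fun n ↦ mem_closedBall_zero_iff.1 (hu n), ?_⟩
  simpa only [hfu, f.sSup_unitClosedBall_eq_norm] using hr

theorem exists_apply_eq_smul_tendsto_subseq_of_tendsto_apply_sub_smul
    {𝕜 E : Type*} [NontriviallyNormedField 𝕜] [NormedAddCommGroup E] [NormedSpace 𝕜 E]
    [CompleteSpace E] {A C : E →L[𝕜] E} (hC : IsCompactOperator C) {c : 𝕜}
    (hAC : ‖A - C‖ < ‖c‖) {u : ℕ → E} (hu : Bornology.IsBounded (Set.range u))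
    (h : Tendsto (fun n ↦ A (u n) - c • u n) atTop (𝓝 0)) :
    ∃ x, A x = c • x ∧ ∃ φ : ℕ → ℕ, StrictMono φ ∧ Tendsto (u ∘ φ) atTop (𝓝 x) := by
  obtain ⟨K, hK, hCK⟩ := hC.image_subset_compact_of_bounded (f := (C : E →ₗ[𝕜] E)) hu
  obtain ⟨y, -, φ, hφ, hCy⟩ := hK.tendsto_subseq fun n ↦ hCK ⟨u n, ⟨n, rfl⟩, rfl⟩
  have hunit : IsUnit (algebraMap 𝕜 (E →L[𝕜] E) c - (A - C)) :=
    spectrum.mem_resolventSet_iff.1 <| spectrum.mem_resolventSet_of_norm_lt_mul <|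
      (mul_le_of_le_one_right (norm_nonneg _) norm_id_le).trans_lt hAC
  set e := ContinuousLinearEquiv.unitsEquiv 𝕜 E hunit.unit
  -- `e = c - (A - C)` and `e u = C u - (A u - c u)`: a sequence with a convergent subsequence
  -- plus a null sequence.
  have he : Tendsto (fun n ↦ e (u (φ n))) atTop (𝓝 y) := by
    rw [← sub_zero y]
    refine (hCy.sub (h.comp hφ.tendsto_atTop)).congr fun n ↦ ?_
    simp only [e, ContinuousLinearEquiv.unitsEquiv_apply, IsUnit.unit_spec,
      Function.comp_apply, sub_apply, Algebra.algebraMap_eq_smul_one, smul_apply,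
      one_apply_eq_self, coe_coe]
    abel
  have hux : Tendsto (u ∘ φ) atTop (𝓝 (e.symm y)) := by
    simpa only [Function.comp_def, ContinuousLinearEquiv.symm_apply_apply] using
      (e.symm.continuous.tendsto y).comp he
  refine ⟨e.symm y, ?_, φ, hφ, hux⟩
  rw [← sub_eq_zero]
  exact tendsto_nhds_unique (((A.continuous.tendsto _).comp hux).sub (hux.const_smul c))
    (h.comp hφ.tendsto_atTop)

section Hilbert

variable {𝕜 E F : Type*} [RCLike 𝕜] [NormedAddCommGroup E] [InnerProductSpace 𝕜 E]
  [NormedAddCommGroup F] [InnerProductSpace 𝕜 F]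

theorem norm_adjoint_comp_self_apply_sub_sq_le [CompleteSpace E] [CompleteSpace F]
    (T : E →L[𝕜] F) {x : E} (hx : ‖x‖ ≤ 1) :
    ‖(T† ∘L T) x - (‖T‖ : 𝕜) ^ 2 • x‖ ^ 2 ≤ 2 * ‖T‖ ^ 2 * (‖T‖ ^ 2 - ‖T x‖ ^ 2) := by
  have hTT : ‖(T† ∘L T) x‖ ≤ ‖T‖ ^ 2 := by
    simpa [norm_adjoint_comp_self, sq] using (T† ∘L T).unit_le_opNorm x hx
  have hre : RCLike.re (inner 𝕜 ((T† ∘L T) x) ((‖T‖ : 𝕜) ^ 2 • x)) = ‖T‖ ^ 2 * ‖T x‖ ^ 2 := by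
    rw [inner_smul_right, ← RCLike.ofReal_pow, RCLike.re_ofReal_mul,
      apply_norm_sq_eq_inner_adjoint_left]
  have hx2 : ‖x‖ ^ 2 ≤ 1 := pow_le_one₀ (norm_nonneg x) hx
  rw [norm_sub_sq (𝕜 := 𝕜), hre, norm_smul, norm_pow, RCLike.norm_ofReal, abs_norm]
  nlinarith [pow_le_pow_left₀ (norm_nonneg _) hTT 2, sq_nonneg ‖T‖]

theorem tendsto_adjoint_comp_self_apply_sub_of_tendsto_norm_apply [CompleteSpace E]
    [CompleteSpace F] (T : E →L[𝕜] F) {u : ℕ → E} (hu : ∀ n, ‖u n‖ ≤ 1)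
    (h : Tendsto (fun n ↦ ‖T (u n)‖) atTop (𝓝 ‖T‖)) :
    Tendsto (fun n ↦ (T† ∘L T) (u n) - (‖T‖ : 𝕜) ^ 2 • u n) atTop (𝓝 0) := by
  have hbound : Tendsto (fun n ↦ 2 * ‖T‖ ^ 2 * (‖T‖ ^ 2 - ‖T (u n)‖ ^ 2)) atTop (𝓝 0) := by
    convert ((h.pow 2).const_sub (‖T‖ ^ 2)).const_mul (2 * ‖T‖ ^ 2) using 2
    ring
  rw [tendsto_zero_iff_norm_tendsto_zero]
  refine squeeze_zero (fun n ↦ norm_nonneg _) (fun n ↦ ?_)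
    (by simpa only [Real.sqrt_zero] using hbound.sqrt)
  exact Real.le_sqrt_of_sq_le (norm_adjoint_comp_self_apply_sub_sq_le T (hu n))

theorem exists_unit_eigenvector_adjoint_comp_self_of_infDist_lt_norm [CompleteSpace E]
    [CompleteSpace F] (T : E →L[𝕜] F)
    (hT : Metric.infDist T {S : E →L[𝕜] F | IsCompactOperator S} < ‖T‖) :
    ∃ x : E, ‖x‖ = 1 ∧ ‖T x‖ = ‖T‖ ∧ (T† ∘L T) x = (‖T‖ : 𝕜) ^ 2 • x := by
  have hpos : 0 < ‖T‖ := Metric.infDist_nonneg.trans_lt hT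
  obtain ⟨K, hK, hTK⟩ := (Metric.infDist_lt_iff ⟨0, isCompactOperator_zero⟩).1 hT
  obtain ⟨u, hu, hTu⟩ := T.exists_seq_norm_le_one_tendsto_norm_apply
  have hnear : ‖T† ∘L T - T† ∘L K‖ < ‖(‖T‖ : 𝕜) ^ 2‖ := calc
    ‖T† ∘L T - T† ∘L K‖ = ‖T† ∘L (T - K)‖ := by rw [comp_sub]
    _ ≤ ‖T‖ * ‖T - K‖ := by simpa using opNorm_comp_le (T†) (T - K)
    _ < ‖T‖ * ‖T‖ := mul_lt_mul_of_pos_left (by rwa [← dist_eq_norm]) hpos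
    _ = ‖(‖T‖ : 𝕜) ^ 2‖ := by simp [sq]
  have hbdd : Bornology.IsBounded (Set.range u) :=
    isBounded_iff_forall_norm_le.2 ⟨1, by rintro _ ⟨n, rfl⟩; exact hu n⟩
  obtain ⟨x, hx, φ, hφ, hux⟩ := exists_apply_eq_smul_tendsto_subseq_of_tendsto_apply_sub_smul
    (hK.clm_comp (T†)) hnear hbdd
    (tendsto_adjoint_comp_self_apply_sub_of_tendsto_norm_apply T hu hTu)
  have hx1 : ‖x‖ ≤ 1 := le_of_tendsto' ((continuous_norm.tendsto x).comp hux) fun n ↦ hu (φ n)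
  have hTx : ‖T x‖ = ‖T‖ :=
    tendsto_nhds_unique ((T.continuous.norm.tendsto x).comp hux) (hTu.comp hφ.tendsto_atTop)
  refine ⟨x, le_antisymm hx1 ?_, hTx, hx⟩
  simpa [hTx, le_mul_iff_one_le_right hpos] using T.le_opNorm x

end Hilbert

/-- **Corollary 2.8 (second part).** If `T` is a bounded linear operator on a complex Hilbert
space `H` whose operator-norm distance to the compact operators is less than `‖T‖`, then
there is a unit vector `x₀ ∈ H` with `(1/‖T‖)·T x₀ = (1/‖T T⋆ T‖)·(T T⋆ T) x₀`,
`‖T x₀‖ = ‖T‖` and `‖(T T⋆ T) x₀‖ = ‖T T⋆ T‖`. -/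
theorem exists_unit_vector_of_dist_compact_lt_norm
    {H : Type*} [NormedAddCommGroup H] [InnerProductSpace ℂ H] [CompleteSpace H]
    (T : H →L[ℂ] H)
    (hT : Metric.infDist T {S : H →L[ℂ] H | IsCompactOperator S} < ‖T‖) :
    ∃ x₀ : H, ‖x₀‖ = 1 ∧
      (1 / ‖T‖) • T x₀ =
        (1 / ‖T * ContinuousLinearMap.adjoint T * T‖) •
          (T * ContinuousLinearMap.adjoint T * T) x₀ ∧
      ‖T x₀‖ = ‖T‖ ∧
      ‖(T * ContinuousLinearMap.adjoint T * T) x₀‖ =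
        ‖T * ContinuousLinearMap.adjoint T * T‖ := by
  obtain ⟨x, hx, hTx, hxeig⟩ := exists_unit_eigenvector_adjoint_comp_self_of_infDist_lt_norm T hT
  have hpos : 0 < ‖T‖ := Metric.infDist_nonneg.trans_lt hT
  have happly : (T * T† * T) x = (‖T‖ : ℂ) ^ 2 • T x := by
    show T ((T† ∘L T) x) = _
    rw [hxeig, map_smul]
    rfl
  have hnorm_apply : ‖(T * T† * T) x‖ = ‖T‖ ^ 3 := by
    rw [happly, norm_smul, norm_pow, Complex.norm_real, norm_norm, hTx]
    ring
  have hnorm : ‖T * T† * T‖ = ‖T‖ ^ 3 := by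
    refine le_antisymm ?_ ?_
    · calc ‖T * T† * T‖ ≤ ‖T‖ * ‖T†‖ * ‖T‖ := norm_mul₃_le
        _ = ‖T‖ ^ 3 := by rw [LinearIsometryEquiv.norm_map]; ring
    · simpa only [hx, mul_one, hnorm_apply] using (T * T† * T).le_opNorm x
  refine ⟨x, hx, ?_, hTx, hnorm_apply.trans hnorm.symm⟩
  rw [happly, hnorm, ← Complex.ofReal_pow, Complex.coe_smul, smul_smul]
  congr 1
  field_simp
end

section
/- Let X be a Hilbert A-module over a C*-algebra A and let x, y ∈ X. The following are equivalent: (i) x ⊥ˢ_B y, i.e. ‖x‖ ≤ ‖x + y·a‖ for all a ∈ A; (ii) ρ₋(x, y·a) ≤ 0 for all a ∈ A; (iii) ρ₊(x, y·a) ≥ 0 for all a ∈ A. -/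
open scoped ComplexOrder RightActions
open Filter Topology Set

/-! `ρ±(x, z)` are the one-sided limits at `0` of `normSqSlope x z`, a slope of the convex function
`t ↦ ‖x + t • z‖ ^ 2`; it is therefore monotone on `t ≠ 0`, so `ρ₊(x, z)` is its infimum over
`t > 0` and `ρ₋(x, z)` its supremum over `t < 0`. As the sign of `normSqSlope x z t` compares
`‖x + t • z‖` with `‖x‖`, `ρ₊(x, z) ≥ 0` says `‖x‖ ≤ ‖x + t • z‖` for all `t > 0`, and
`ρ₋(x, z) ≤ 0` says the same for all `t < 0`. The vectors `y <• a` are stable under real scaling,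
`t • (y <• a) = y <• (t • a)`, so either half-line recovers `‖x‖ ≤ ‖x + y <• a‖` for all `a`. -/

section NormSqSlope

variable {F : Type*} [NormedAddCommGroup F] [NormedSpace ℝ F]

noncomputable def normSqSlope (x z : F) (t : ℝ) : ℝ := (‖x + t • z‖ ^ 2 - ‖x‖ ^ 2) / (2 * t)

lemma convexOn_norm_add_smul_sq (x z : F) : ConvexOn ℝ univ (fun t : ℝ => ‖x + t • z‖ ^ 2) := by
  have hline : ConvexOn ℝ univ (fun t : ℝ => ‖x + t • z‖) := by
    have h := convexOn_univ_norm.comp_affineMap (AffineMap.lineMap x (x + z))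
    simpa [Function.comp_def, AffineMap.lineMap_apply, add_comm] using h
  exact hline.pow (fun _ _ => norm_nonneg _) 2

lemma normSqSlope_le_normSqSlope (x z : F) {s t : ℝ} (hs : s ≠ 0) (ht : t ≠ 0) (hst : s ≤ t) :
    normSqSlope x z s ≤ normSqSlope x z t := by
  have h := (convexOn_norm_add_smul_sq x z).secant_mono (a := 0) (mem_univ _) (mem_univ s)
    (mem_univ t) hs ht hst
  simp only [zero_smul, add_zero, sub_zero] at h
  simp only [normSqSlope, mul_comm (2 : ℝ), ← div_div]
  exact div_le_div_of_nonneg_right h zero_le_two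

lemma normSqSlope_nonneg_iff (x z : F) {t : ℝ} (ht : 0 < t) :
    0 ≤ normSqSlope x z t ↔ ‖x‖ ≤ ‖x + t • z‖ := by
  rw [normSqSlope, le_div_iff₀ (by positivity), zero_mul, sub_nonneg]
  exact pow_le_pow_iff_left₀ (norm_nonneg _) (norm_nonneg _) two_ne_zero

lemma normSqSlope_nonpos_iff (x z : F) {t : ℝ} (ht : t < 0) :
    normSqSlope x z t ≤ 0 ↔ ‖x‖ ≤ ‖x + t • z‖ := by
  rw [normSqSlope, div_le_iff_of_neg (by linarith), zero_mul, sub_nonneg]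
  exact pow_le_pow_iff_left₀ (norm_nonneg _) (norm_nonneg _) two_ne_zero

lemma exists_tendsto_normSqSlope_nhdsGT (x z : F) :
    ∃ L, Tendsto (normSqSlope x z) (𝓝[>] 0) (𝓝 L) := by
  have hmono : MonotoneOn (normSqSlope x z) (Ioi 0) := fun s hs t _ hst =>
    normSqSlope_le_normSqSlope x z hs.ne' (hs.trans_le hst).ne' hst
  have hbdd : BddBelow (normSqSlope x z '' Ioi 0) := by
    refine ⟨normSqSlope x z (-1), ?_⟩
    rintro _ ⟨t, ht, rfl⟩
    exact normSqSlope_le_normSqSlope x z (by norm_num) (ne_of_gt ht)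
      (by linarith [mem_Ioi.mp ht])
  exact ⟨_, hmono.tendsto_nhdsGT hbdd⟩

lemma exists_tendsto_normSqSlope_nhdsLT (x z : F) :
    ∃ L, Tendsto (normSqSlope x z) (𝓝[<] 0) (𝓝 L) := by
  have hmono : MonotoneOn (normSqSlope x z) (Iio 0) := fun s hs t ht hst =>
    normSqSlope_le_normSqSlope x z hs.ne ht.ne hst
  have hbdd : BddAbove (normSqSlope x z '' Iio 0) := by
    refine ⟨normSqSlope x z 1, ?_⟩
    rintro _ ⟨t, ht, rfl⟩
    exact normSqSlope_le_normSqSlope x z ht.ne (by norm_num) (by linarith [mem_Iio.mp ht])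
  exact ⟨_, hmono.tendsto_nhdsLT hbdd⟩

lemma exists_nonneg_tendsto_normSqSlope_nhdsGT_iff (x z : F) :
    (∃ L, 0 ≤ L ∧ Tendsto (normSqSlope x z) (𝓝[>] 0) (𝓝 L)) ↔
      ∀ t : ℝ, 0 < t → ‖x‖ ≤ ‖x + t • z‖ := by
  refine ⟨fun ⟨L, hL, hlim⟩ t ht => ?_, fun h => ?_⟩
  · have hle : L ≤ normSqSlope x z t := by
      refine le_of_tendsto hlim ?_
      filter_upwards [Ioo_mem_nhdsGT ht] with s hs
      exact normSqSlope_le_normSqSlope x z hs.1.ne' ht.ne' hs.2.le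
    exact (normSqSlope_nonneg_iff x z ht).1 (hL.trans hle)
  · obtain ⟨L, hlim⟩ := exists_tendsto_normSqSlope_nhdsGT x z
    refine ⟨L, ge_of_tendsto hlim ?_, hlim⟩
    filter_upwards [self_mem_nhdsWithin] with t ht
    exact (normSqSlope_nonneg_iff x z ht).2 (h t ht)

lemma exists_nonpos_tendsto_normSqSlope_nhdsLT_iff (x z : F) :
    (∃ L, L ≤ 0 ∧ Tendsto (normSqSlope x z) (𝓝[<] 0) (𝓝 L)) ↔
      ∀ t : ℝ, t < 0 → ‖x‖ ≤ ‖x + t • z‖ := by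
  refine ⟨fun ⟨L, hL, hlim⟩ t ht => ?_, fun h => ?_⟩
  · have hle : normSqSlope x z t ≤ L := by
      refine ge_of_tendsto hlim ?_
      filter_upwards [Ioo_mem_nhdsLT ht] with s hs
      exact normSqSlope_le_normSqSlope x z ht.ne hs.2.ne hs.1.le
    exact (normSqSlope_nonpos_iff x z ht).1 (hle.trans hL)
  · obtain ⟨L, hlim⟩ := exists_tendsto_normSqSlope_nhdsLT x z
    refine ⟨L, le_of_tendsto hlim ?_, hlim⟩
    filter_upwards [self_mem_nhdsWithin] with t ht
    exact (normSqSlope_nonpos_iff x z ht).2 (h t ht)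

variable {S : Set F}

lemma forall_norm_le_norm_add_iff_nhdsGT (hS : ∀ v ∈ S, ∀ t : ℝ, t • v ∈ S) (x : F) :
    (∀ v ∈ S, ‖x‖ ≤ ‖x + v‖) ↔
      ∀ v ∈ S, ∃ L, 0 ≤ L ∧ Tendsto (normSqSlope x v) (𝓝[>] 0) (𝓝 L) := by
  simp only [exists_nonneg_tendsto_normSqSlope_nhdsGT_iff]
  refine ⟨fun h v hv t _ => h _ (hS v hv t), fun h v hv => ?_⟩
  simpa using h v hv 1 one_pos

lemma forall_norm_le_norm_add_iff_nhdsLT (hS : ∀ v ∈ S, ∀ t : ℝ, t • v ∈ S) (x : F) :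
    (∀ v ∈ S, ‖x‖ ≤ ‖x + v‖) ↔
      ∀ v ∈ S, ∃ L, L ≤ 0 ∧ Tendsto (normSqSlope x v) (𝓝[<] 0) (𝓝 L) := by
  simp only [exists_nonpos_tendsto_normSqSlope_nhdsLT_iff]
  refine ⟨fun h v hv t _ => h _ (hS v hv t), fun h v hv => ?_⟩
  simpa [smul_smul] using h _ (hS v hv (-1)) (-1) (by norm_num)

end NormSqSlope

namespace CStarModuleRight

variable {A E : Type*} [NonUnitalRing A] [StarRing A] [Module ℂ A] [PartialOrder A] [Norm A] [AddCommGroup E] [Module ℂ E] [SMul Aᵐᵒᵖ E] [Norm E]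
  [CStarModuleRight A E]

lemma inner_sub_right (x y z : E) : inner A x (y - z) = inner A x y - inner A x z := by
  rw [eq_sub_iff_add_eq, ← inner_add_right, sub_add_cancel]

lemma smul_op_smul_comm [SMulCommClass ℂ A A] (c : ℂ) (a : A) (y : E) : c • (y <• a) = y <• (c • a) := by
  have h : ∀ u : E, inner A u (c • (y <• a) - y <• (c • a)) = 0 := fun u => by
    rw [inner_sub_right, inner_smul_right_complex, inner_op_smul_right, inner_op_smul_right,
      mul_smul_comm, sub_self]
  exact sub_eq_zero.mp (inner_self.mp (h _))

lemma real_smul_op_smul_comm [SMulCommClass ℂ A A] [Module ℝ A] [IsScalarTower ℝ ℂ A] [Module ℝ E]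
    [IsScalarTower ℝ ℂ E] (t : ℝ) (a : A) (y : E) : t • (y <• a) = y <• (t • a) := by
  rw [RCLike.real_smul_eq_coe_smul (K := ℂ), RCLike.real_smul_eq_coe_smul (K := ℂ) t a,
    smul_op_smul_comm]

end CStarModuleRight

theorem strongBirkhoffJames_iff_rhoMinus_iff_rhoPlus_general
    {A E : Type*} [NonUnitalCStarAlgebra A] [PartialOrder A]
    [NormedAddCommGroup E] [NormedSpace ℂ E] [SMul Aᵐᵒᵖ E] [CStarModuleRight A E]
    (x y : E) :
    ((∀ a : A, ‖x‖ ≤ ‖x + y <• a‖) ↔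
      ∀ a : A, ∃ L : ℝ, L ≤ 0 ∧
        Tendsto (fun t : ℝ => (‖x + t • (y <• a)‖ ^ 2 - ‖x‖ ^ 2) / (2 * t))
          (𝓝[<] 0) (𝓝 L)) ∧
    ((∀ a : A, ‖x‖ ≤ ‖x + y <• a‖) ↔
      ∀ a : A, ∃ L : ℝ, 0 ≤ L ∧
        Tendsto (fun t : ℝ => (‖x + t • (y <• a)‖ ^ 2 - ‖x‖ ^ 2) / (2 * t))
          (𝓝[>] 0) (𝓝 L)) := by
  have hS : ∀ v ∈ range (fun a : A => y <• a), ∀ t : ℝ, t • v ∈ range (fun a : A => y <• a) := by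
    rintro _ ⟨a, rfl⟩ t
    exact ⟨t • a, (CStarModuleRight.real_smul_op_smul_comm t a y).symm⟩
  have hLT := forall_norm_le_norm_add_iff_nhdsLT hS x
  have hGT := forall_norm_le_norm_add_iff_nhdsGT hS x
  simp only [forall_mem_range] at hLT hGT
  exact ⟨hLT, hGT⟩

/-- **Theorem 3.3.** For elements `x, y` of a Hilbert C⋆-module `E` over a C⋆-algebra `A`,
the following are equivalent: (i) `x ⊥ˢ_B y`, i.e. `‖x‖ ≤ ‖x + y·a‖` for all `a ∈ A`;
(ii) `ρ₋(x, y·a) ≤ 0` for all `a ∈ A`; (iii) `ρ₊(x, y·a) ≥ 0` for all `a ∈ A`.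
(Here `ρ±(x, z)` is the limit of `(‖x + t·z‖² - ‖x‖²)/(2t)` as `t → 0±`, which always
exists; we phrase `ρ₋(x, z) ≤ 0` and `ρ₊(x, z) ≥ 0` by exhibiting the limit.) -/
theorem strongBirkhoffJames_iff_rhoMinus_iff_rhoPlus
    {A E : Type*} [NonUnitalCStarAlgebra A] [PartialOrder A] [StarOrderedRing A]
    [NormedAddCommGroup E] [NormedSpace ℂ E] [SMul Aᵐᵒᵖ E] [CStarModuleRight A E]
    [CompleteSpace E] (x y : E) :
    ((∀ a : A, ‖x‖ ≤ ‖x + y <• a‖) ↔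
      ∀ a : A, ∃ L : ℝ, L ≤ 0 ∧
        Tendsto (fun t : ℝ => (‖x + t • (y <• a)‖ ^ 2 - ‖x‖ ^ 2) / (2 * t))
          (𝓝[<] 0) (𝓝 L)) ∧
    ((∀ a : A, ‖x‖ ≤ ‖x + y <• a‖) ↔
      ∀ a : A, ∃ L : ℝ, 0 ≤ L ∧
        Tendsto (fun t : ℝ => (‖x + t • (y <• a)‖ ^ 2 - ‖x‖ ^ 2) / (2 * t))
          (𝓝[>] 0) (𝓝 L)) :=
  strongBirkhoffJames_iff_rhoMinus_iff_rhoPlus_general x y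
end

section
/- Let X be a Hilbert A-module over a C*-algebra A, let x, y ∈ X, and let φ be a state on A with φ(⟨x, x⟩) = ‖x‖². Then Re φ(⟨x, y⟩) ≤ ρ₊(x, y); that is, if L is the limit as t → 0⁺ of (‖x + t·y‖² − ‖x‖²)/(2t), then Re φ(⟨x, y⟩) ≤ L. -/
/-!
Because `‖φ‖ = 1`, `Re φ⟪z, z⟫ ≤ ‖z‖²` for every `z`. Expanding `z = x + t • y` and using
`φ⟪x, x⟫ = ‖x‖²`, `φ⟪y, y⟫ ≥ 0` and `Re φ⟪y, x⟫ = Re φ⟪x, y⟫` (a positive functional is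
`⋆`-preserving) gives `2 t Re φ⟪x, y⟫ ≤ ‖x + t • y‖² - ‖x‖²` for all real `t`;
dividing by `2t > 0` and letting `t → 0⁺` yields the claim.
-/

open scoped ComplexOrder RightActions
open Filter Topology

lemma LinearMap.re_apply_star_of_nonneg {A : Type*} [AddCommGroup A] [PartialOrder A]
    [IsOrderedAddMonoid A] [StarAddMonoid A] [SelfAdjointDecompose A] [Module ℂ A]
    [StarModule ℂ A] (φ : A →ₗ[ℂ] ℂ) (hφ : ∀ a, 0 ≤ a → 0 ≤ φ a) (a : A) :
    (φ (star a)).re = (φ a).re :=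
  (congrArg Complex.re (map_star (PositiveLinearMap.mk₀ φ hφ) a)).trans (Complex.conj_re _)

namespace CStarModule

variable {A E : Type*} [NonUnitalCStarAlgebra A] [PartialOrder A] [NormedAddCommGroup E]
  [NormedSpace ℂ E] [SMul A E] [CStarModule A E]

lemma re_apply_inner_add_smul_self [StarOrderedRing A] (φ : A →ₗ[ℂ] ℂ)
    (hφ : ∀ a, 0 ≤ a → 0 ≤ φ a) (x y : E) (t : ℝ) :
    (φ (inner A (x + t • y) (x + t • y))).re =
      (φ (inner A x x)).re + 2 * t * (φ (inner A x y)).re + t ^ 2 * (φ (inner A y y)).re := by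
  have hsymm : (φ (inner A y x)).re = (φ (inner A x y)).re := by
    rw [← star_inner x y, φ.re_apply_star_of_nonneg hφ]
  simp only [inner_add_left, inner_add_right, inner_smul_left_real, inner_smul_right_real,
    map_add, LinearMap.map_smul_of_tower, Complex.add_re, Complex.real_smul,
    Complex.re_ofReal_mul, hsymm]
  ring

lemma re_apply_inner_self_le (φ : A →L[ℂ] ℂ) (z : E) :
    (φ (inner A z z)).re ≤ ‖φ‖ * ‖z‖ ^ 2 :=
  calc (φ (inner A z z)).re ≤ ‖φ (inner A z z)‖ := Complex.re_le_norm _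
    _ ≤ ‖φ‖ * ‖inner A z z‖ := φ.le_opNorm _
    _ = ‖φ‖ * ‖z‖ ^ 2 := by rw [norm_sq_eq (A := A)]

lemma two_mul_re_apply_inner_le [StarOrderedRing A] (φ : A →L[ℂ] ℂ) (hφ₁ : ‖φ‖ ≤ 1)
    (hφ : ∀ a, 0 ≤ a → 0 ≤ φ a) {x : E} (hx : ‖x‖ ^ 2 ≤ (φ (inner A x x)).re) (y : E)
    (t : ℝ) :
    2 * t * (φ (inner A x y)).re ≤ ‖x + t • y‖ ^ 2 - ‖x‖ ^ 2 := by
  have hexp := re_apply_inner_add_smul_self (φ : A →ₗ[ℂ] ℂ) hφ x y t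
  simp only [ContinuousLinearMap.coe_coe] at hexp
  have hle := re_apply_inner_self_le φ (x + t • y)
  have hφ_le : ‖φ‖ * ‖x + t • y‖ ^ 2 ≤ ‖x + t • y‖ ^ 2 :=
    mul_le_of_le_one_left (sq_nonneg _) hφ₁
  have hyy : 0 ≤ (φ (inner A y y)).re := (Complex.nonneg_iff.mp (hφ _ inner_self_nonneg)).1
  linarith [mul_nonneg (sq_nonneg t) hyy]

end CStarModule

theorem re_state_inner_le_rhoPlus_general
    {A E : Type*} [NonUnitalCStarAlgebra A] [PartialOrder A] [StarOrderedRing A]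
    [NormedAddCommGroup E] [NormedSpace ℂ E] [SMul A E] [CStarModule A E]
    (x y : E) (φ : A →L[ℂ] ℂ)
    (hφ_state : ‖φ‖ = 1 ∧ ∀ a : A, 0 ≤ a → 0 ≤ φ a)
    (hφx : φ (inner A x x) = (‖x‖ : ℂ) ^ 2) (L : ℝ)
    (hL : Tendsto (fun t : ℝ => (‖x + t • y‖ ^ 2 - ‖x‖ ^ 2) / (2 * t)) (𝓝[>] 0) (𝓝 L)) :
    (φ (inner A x y)).re ≤ L := by
  obtain ⟨hφ₁, hφ⟩ := hφ_state
  have hx : ‖x‖ ^ 2 ≤ (φ (inner A x x)).re := by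
    rw [hφx, ← Complex.ofReal_pow, Complex.ofReal_re]
  refine ge_of_tendsto hL ?_
  filter_upwards [self_mem_nhdsWithin] with t (ht : 0 < t)
  rw [le_div_iff₀ (by positivity), mul_comm]
  exact CStarModule.two_mul_re_apply_inner_le φ hφ₁.le hφ hx y t

/-- If `x, y` are elements of a Hilbert C⋆-module `E` over a C⋆-algebra `A` and `φ` is a
state on `A` with `φ⟪x, x⟫ = ‖x‖²`, then `Re φ⟪x, y⟫ ≤ ρ₊(x, y)`: if `L` is the limit of
`(‖x + t·y‖² - ‖x‖²)/(2t)` as `t → 0⁺`, then `Re φ⟪x, y⟫ ≤ L`. -/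
theorem re_state_inner_le_rhoPlus
    {A E : Type*} [NonUnitalCStarAlgebra A] [PartialOrder A] [StarOrderedRing A]
    [NormedAddCommGroup E] [NormedSpace ℂ E] [SMul A E] [CStarModule A E]
    [CompleteSpace E] (x y : E) (φ : A →L[ℂ] ℂ)
    (hφ_state : ‖φ‖ = 1 ∧ ∀ a : A, 0 ≤ a → 0 ≤ φ a)
    (hφx : φ (inner A x x) = (‖x‖ : ℂ) ^ 2) (L : ℝ)
    (hL : Tendsto (fun t : ℝ => (‖x + t • y‖ ^ 2 - ‖x‖ ^ 2) / (2 * t)) (𝓝[>] 0) (𝓝 L)) :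
    (φ (inner A x y)).re ≤ L :=
  re_state_inner_le_rhoPlus_general x y φ hφ_state hφx L hL
end
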